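/- arXiv:2506.06851 — 4 statements merged into one kernel-verified Lean document; each statement's English description precedes it below -/
import Mathlib

section
/- Let α > 0 and L be the infinite matrix (viewed as a linear operator on eventually-zero or summable nonnegative sequences indexed by ℕ) with L₀ = (1, 1, 2^α, 3^α, 4^α, …), L₁ = (0, 1, 1, 1, 1, …), L₂ = (1, 1, 0, 0, …), and Lₖ = e_{k-1} (the shift) for k ≥ 3. If a = (a₀, a₁, a₂, …) is a sequence of positive reals with ∑_{k≥2} k^α aₖ < ∞ and L a = λ a for some λ > 1, then aₖ = λ^{2-k} a₂ for all k ≥ 3, a₁ = a₂ · λ/(λ-1)², and λ satisfies λ = (1/(λ-1))·∑_{k=2}^∞ k^α λ^{2-k} + λ²/(λ-1)³. -/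
/-!
The shift rows `λ aₖ = aₖ₋₁` (k ≥ 3) make the tail geometric, `aₖ₊₂ = λ⁻ᵏ a₂`. Summing the
geometric series in row 1 gives `a₁`; eliminating `a₀` between rows 0 and 2 expresses the weighted
sum `∑ (k+2)^α aₖ₊₂` through `a₁, a₂`, and dividing by `a₂ > 0` yields the scalar equation for `λ`.
-/

theorem eq_inv_pow_mul_of_mul_succ_eq {K : Type*} [DivisionRing K] {c : K} (hc : c ≠ 0)
    {b : ℕ → K} (hb : ∀ n, c * b (n + 1) = b n) (n : ℕ) : b n = c⁻¹ ^ n * b 0 := by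
  induction n with
  | zero => simp
  | succ n ih => rw [pow_succ', mul_assoc, ← ih, ← hb n, inv_mul_cancel_left₀ hc]

theorem tsum_inv_pow_of_one_lt {c : ℝ} (hc : 1 < c) : ∑' k : ℕ, c⁻¹ ^ k = c / (c - 1) := by
  have hc0 : c ≠ 0 := by positivity
  rw [tsum_geometric_of_lt_one (by positivity) (inv_lt_one_of_one_lt₀ hc)]
  field_simp

theorem stmt1_general (α : ℝ) (a : ℕ → ℝ) (ha : ∀ k, 0 < a k)
    (lam : ℝ) (hlam : 1 < lam)
    (h0 : lam * a 0 = a 0 + a 1 + ∑' k : ℕ, ((k : ℝ) + 2) ^ α * a (k + 2))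
    (h1 : lam * a 1 = a 1 + ∑' k : ℕ, a (k + 2))
    (h2 : lam * a 2 = a 0 + a 1)
    (hk : ∀ k, 3 ≤ k → lam * a k = a (k - 1)) :
    (∀ k : ℕ, 3 ≤ k → a k = lam ^ (2 - (k : ℤ)) * a 2) ∧
    a 1 = a 2 * (lam / (lam - 1) ^ 2) ∧
    lam = (1 / (lam - 1)) *
        (∑' k : ℕ, ((k : ℝ) + 2) ^ α * lam ^ (-(k : ℤ)))
      + lam ^ 2 / (lam - 1) ^ 3 := by
  have hlam0 : lam ≠ 0 := by positivity
  have hlam1 : lam - 1 ≠ 0 := sub_ne_zero.mpr hlam.ne'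
  have htail : ∀ k, a (k + 2) = lam⁻¹ ^ k * a 2 :=
    eq_inv_pow_mul_of_mul_succ_eq (b := fun k => a (k + 2)) hlam0
      fun n => hk (n + 3) (by omega)
  have ha1 : a 1 = a 2 * (lam / (lam - 1) ^ 2) := by
    rw [tsum_congr htail, tsum_mul_right, tsum_inv_pow_of_one_lt hlam] at h1
    field_simp at h1 ⊢
    linear_combination h1
  refine ⟨fun k hk3 => ?_, ha1, ?_⟩
  · obtain ⟨m, rfl⟩ : ∃ m, k = m + 2 := ⟨k - 2, by omega⟩
    rw [htail, show (2 : ℤ) - ((m + 2 : ℕ) : ℤ) = -m by push_cast; ring, zpow_neg,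
      zpow_natCast, inv_pow]
  · have hmoments : (∑' k : ℕ, ((k : ℝ) + 2) ^ α * lam ^ (-(k : ℤ))) * a 2
        = ∑' k : ℕ, ((k : ℝ) + 2) ^ α * a (k + 2) := by
      rw [← tsum_mul_right]
      refine tsum_congr fun k => ?_
      rw [htail k, zpow_neg, zpow_natCast, inv_pow, mul_assoc]
    have hmoments_eq : ∑' k : ℕ, ((k : ℝ) + 2) ^ α * a (k + 2)
        = a 2 * lam * (lam - 1) - a 1 * lam := by
      linear_combination -h0 - (lam - 1) * h2
    have ha2 : a 2 ≠ 0 := (ha 2).ne'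
    rw [eq_div_of_mul_eq ha2 hmoments, hmoments_eq, ha1]
    field_simp
    ring

theorem stmt1 (α : ℝ) (hα : 0 < α) (a : ℕ → ℝ) (ha : ∀ k, 0 < a k)
    (hsum : Summable fun k : ℕ => ((k : ℝ) + 2) ^ α * a (k + 2))
    (lam : ℝ) (hlam : 1 < lam)
    (h0 : lam * a 0 = a 0 + a 1 + ∑' k : ℕ, ((k : ℝ) + 2) ^ α * a (k + 2))
    (h1 : lam * a 1 = a 1 + ∑' k : ℕ, a (k + 2))
    (h2 : lam * a 2 = a 0 + a 1)
    (hk : ∀ k, 3 ≤ k → lam * a k = a (k - 1)) :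
    (∀ k : ℕ, 3 ≤ k → a k = lam ^ (2 - (k : ℤ)) * a 2) ∧
    a 1 = a 2 * (lam / (lam - 1) ^ 2) ∧
    lam = (1 / (lam - 1)) *
        (∑' k : ℕ, ((k : ℝ) + 2) ^ α * lam ^ (-(k : ℤ)))
      + lam ^ 2 / (lam - 1) ^ 3 :=
  stmt1_general α a ha lam hlam h0 h1 h2 hk
end

section
/- Let 0 < r₁ ≤ r₂ < 1, let Γ be a finite index set and for each j ∈ Γ let N_j ∈ ℕ₊. Then max over probability vectors p = (p_i) on Σ := ⨆_{j∈Γ} {1,…,N_j} of the quantity D(p) := (∑_i p_i log p_i)/log r₁ + (∑_j q_j log q_j)·(1/log r₂ − 1/log r₁), where q_j := ∑_{i in block j} p_i, equals log(∑_{j∈Γ} N_j^{log r₂ / log r₁}) / (−log r₂). -/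
/-!
Multiplying by `-log r₂ > 0` turns `D(p)` into `γ (B - A) - B`, where `A = ∑ pᵢ log pᵢ`,
`B = ∑ qⱼ log qⱼ` and `γ = log r₂ / log r₁ ≥ 0`. Two applications of the log-sum inequality bound
this: inside each block the entropy is at most `log Nⱼ`, so `B - A ≤ ∑ qⱼ log Nⱼ`, and across blocks
`∑ qⱼ (γ log Nⱼ - log qⱼ) ≤ log ∑ Nⱼ ^ γ`. Both are equalities when `q` is the Gibbs vector
`qⱼ = Nⱼ ^ γ / ∑ Nⱼ' ^ γ`, spread uniformly over each block.
-/

open Real Finset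

namespace Real

theorem mul_log_sub_log_le_sub {w a : ℝ} (hw : 0 ≤ w) (ha : 0 < a) :
    w * (log a - log w) ≤ a - w := by
  rcases hw.eq_or_lt with rfl | hw
  · simpa using ha.le
  calc w * (log a - log w) = w * log (a / w) := by rw [log_div ha.ne' hw.ne']
    _ ≤ w * (a / w - 1) := by gcongr; exact log_le_sub_one_of_pos (div_pos ha hw)
    _ = a - w := by field_simp

/-- The log-sum inequality. -/
theorem sum_mul_log_sub_log_le {α : Type*} (s : Finset α) {w a : α → ℝ}
    (hw : ∀ i ∈ s, 0 ≤ w i) (ha : ∀ i ∈ s, 0 < a i) :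
    ∑ i ∈ s, w i * (log (a i) - log (w i)) ≤
      (∑ i ∈ s, w i) * (log (∑ i ∈ s, a i) - log (∑ i ∈ s, w i)) := by
  set W := ∑ i ∈ s, w i
  set A := ∑ i ∈ s, a i
  rcases (sum_nonneg hw).eq_or_lt with hW | hW
  · have hw0 : ∀ i ∈ s, w i = 0 := (sum_eq_zero_iff_of_nonneg hw).1 hW.symm
    rw [show W = 0 from hW.symm, zero_mul]
    exact (sum_eq_zero fun i hi => by rw [hw0 i hi, zero_mul]).le
  have hA : 0 < A := sum_pos ha (nonempty_of_sum_ne_zero hW.ne')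
  -- compare `w` with the rescaled weights `a * W / A`, which have the same total mass
  have hpoint : ∀ i ∈ s, w i * (log (a i) - log (w i)) - w i * (log A - log W) ≤
      a i * W / A - w i := fun i hi => by
    have hai := ha i hi
    have := mul_log_sub_log_le_sub (hw i hi) (by positivity : 0 < a i * W / A)
    rw [log_div (by positivity) hA.ne', log_mul hai.ne' hW.ne'] at this
    linear_combination this
  have hmass : ∑ i ∈ s, (a i * W / A - w i) = 0 := by
    rw [sum_sub_distrib, ← sum_div, ← sum_mul, mul_div_cancel_left₀ W hA.ne', sub_self]
  have := sum_le_sum hpoint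
  rw [sum_sub_distrib, ← sum_mul, hmass] at this
  linarith

theorem mul_log_sum_sub_sum_mul_log_le {α : Type*} [Fintype α] {p : α → ℝ}
    (hp : ∀ i, 0 ≤ p i) :
    (∑ i, p i) * log (∑ i, p i) - ∑ i, p i * log (p i) ≤ (∑ i, p i) * log (Fintype.card α) := by
  have := sum_mul_log_sub_log_le univ (fun i _ => hp i) (a := fun _ => 1) fun _ _ => one_pos
  simp only [log_one, zero_sub, mul_neg, sum_neg_distrib, sum_const, card_univ,
    nsmul_eq_mul, mul_one] at this
  linarith

end Real

section Blocks

variable {ι : Type*} {β : ι → Type*} [∀ j, Fintype (β j)]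

def blockMass (p : (Σ j, β j) → ℝ) (j : ι) : ℝ := ∑ i, p ⟨j, i⟩

/-- `-log r₂` times the dimension formula `D(p)`, where `γ = log r₂ / log r₁`. -/
noncomputable def dimFunctional [Fintype ι] (γ : ℝ) (p : (Σ j, β j) → ℝ) : ℝ :=
  γ * (∑ j, blockMass p j * log (blockMass p j) - ∑ i, p i * log (p i)) -
    ∑ j, blockMass p j * log (blockMass p j)

theorem sum_blockMass [Fintype ι] (p : (Σ j, β j) → ℝ) : ∑ j, blockMass p j = ∑ i, p i :=
  (Fintype.sum_sigma p).symm

theorem sum_blockMass_mul_log_sub_sum_mul_log_le [Fintype ι] (p : (Σ j, β j) → ℝ)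
    (hp : ∀ i, 0 ≤ p i) :
    ∑ j, blockMass p j * log (blockMass p j) - ∑ i, p i * log (p i) ≤
      ∑ j, blockMass p j * log (Fintype.card (β j)) := by
  rw [Fintype.sum_sigma, ← sum_sub_distrib]
  exact sum_le_sum fun j _ => mul_log_sum_sub_sum_mul_log_le fun i => hp ⟨j, i⟩

theorem dimFunctional_le [Fintype ι] [∀ j, Nonempty (β j)] {γ : ℝ} (hγ : 0 ≤ γ)
    {p : (Σ j, β j) → ℝ} (hp : ∀ i, 0 ≤ p i) (hp₁ : ∑ i, p i = 1) :
    dimFunctional γ p ≤ log (∑ j, (Fintype.card (β j) : ℝ) ^ γ) := by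
  have hcard : ∀ j, (0 : ℝ) < Fintype.card (β j) := fun j => mod_cast Fintype.card_pos
  have hq₁ : ∑ j, blockMass p j = 1 := (sum_blockMass p).trans hp₁
  have hgibbs := sum_mul_log_sub_log_le univ (w := blockMass p)
    (fun j _ => sum_nonneg fun i _ => hp ⟨j, i⟩) (fun j _ => rpow_pos_of_pos (hcard j) γ)
  rw [hq₁, log_one, sub_zero, one_mul] at hgibbs
  calc dimFunctional γ p ≤ γ * ∑ j, blockMass p j * log (Fintype.card (β j)) -
        ∑ j, blockMass p j * log (blockMass p j) := by
        unfold dimFunctional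
        gcongr
        exact sum_blockMass_mul_log_sub_sum_mul_log_le p hp
    _ = ∑ j, blockMass p j * (log ((Fintype.card (β j) : ℝ) ^ γ) - log (blockMass p j)) := by
        simp only [log_rpow (hcard _), mul_sub, sum_sub_distrib, mul_sum]
        congr 1; exact sum_congr rfl fun j _ => by ring
    _ ≤ _ := hgibbs

noncomputable def spreadUniformly (q : ι → ℝ) (i : Σ j, β j) : ℝ := q i.1 / Fintype.card (β i.1)

theorem spreadUniformly_mk (q : ι → ℝ) (j : ι) (i : β j) :
    spreadUniformly q ⟨j, i⟩ = q j / Fintype.card (β j) := rfl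

variable [∀ j, Nonempty (β j)]

theorem blockMass_spreadUniformly (q : ι → ℝ) : blockMass (spreadUniformly (β := β) q) = q := by
  ext j
  have : (Fintype.card (β j) : ℝ) ≠ 0 := mod_cast Fintype.card_ne_zero
  simp only [blockMass, spreadUniformly_mk, sum_const, card_univ, nsmul_eq_mul]
  field_simp

theorem sum_spreadUniformly_mul_log [Fintype ι] (q : ι → ℝ) :
    ∑ i, spreadUniformly (β := β) q i * log (spreadUniformly q i) =
      ∑ j, q j * log (q j) - ∑ j, q j * log (Fintype.card (β j)) := by
  rw [Fintype.sum_sigma, ← sum_sub_distrib]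
  refine sum_congr rfl fun j _ => ?_
  have : (Fintype.card (β j) : ℝ) ≠ 0 := mod_cast Fintype.card_ne_zero
  rcases eq_or_ne (q j) 0 with hq | hq
  · simp [spreadUniformly_mk, hq]
  · simp only [spreadUniformly_mk, log_div hq this, sum_const, card_univ, nsmul_eq_mul]
    field_simp

/-- The maximiser `p_i = N_j ^ (γ - 1) / ∑ j', N_j' ^ γ` for `i` in block `j`. -/
noncomputable def optimalWeight [Fintype ι] (γ : ℝ) : (Σ j, β j) → ℝ :=
  spreadUniformly fun j => (Fintype.card (β j) : ℝ) ^ γ / ∑ j', (Fintype.card (β j') : ℝ) ^ γ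

variable [Fintype ι] [Nonempty ι]

theorem sum_rpow_card_pos (γ : ℝ) : 0 < ∑ j, (Fintype.card (β j) : ℝ) ^ γ :=
  sum_pos (fun _ _ => rpow_pos_of_pos (mod_cast Fintype.card_pos) γ) univ_nonempty

theorem optimalWeight_nonneg (γ : ℝ) (i : Σ j, β j) : 0 ≤ optimalWeight γ i :=
  div_nonneg (div_nonneg (rpow_nonneg (Nat.cast_nonneg _) γ) (sum_rpow_card_pos γ).le)
    (Nat.cast_nonneg _)

theorem sum_optimalWeight (γ : ℝ) : ∑ i, optimalWeight (β := β) γ i = 1 := by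
  rw [← sum_blockMass, optimalWeight, blockMass_spreadUniformly, ← sum_div]
  exact div_self (sum_rpow_card_pos γ).ne'

theorem dimFunctional_optimalWeight (γ : ℝ) :
    dimFunctional γ (optimalWeight (β := β) γ) = log (∑ j, (Fintype.card (β j) : ℝ) ^ γ) := by
  set Z := ∑ j, (Fintype.card (β j) : ℝ) ^ γ
  set q : ι → ℝ := fun j => (Fintype.card (β j) : ℝ) ^ γ / Z
  have hZ : 0 < Z := sum_rpow_card_pos γ
  have hq₁ : ∑ j, q j = 1 := by rw [← sum_div, div_self hZ.ne']
  have hentropy : ∑ j, q j * log (q j) =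
      γ * ∑ j, q j * log (Fintype.card (β j)) - log Z := by
    have hcard : ∀ j, (0 : ℝ) < Fintype.card (β j) := fun j => mod_cast Fintype.card_pos
    have hlog : ∀ j, log (q j) = γ * log (Fintype.card (β j)) - log Z := fun j => by
      rw [log_div (rpow_pos_of_pos (hcard j) γ).ne' hZ.ne', log_rpow (hcard j)]
    simp only [hlog, mul_sub, sum_sub_distrib, ← sum_mul, hq₁, one_mul, mul_sum]
    congr 1
    exact sum_congr rfl fun j _ => by ring
  rw [dimFunctional, optimalWeight, blockMass_spreadUniformly, sum_spreadUniformly_mul_log,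
    hentropy]
  ring

end Blocks

theorem div_add_mul_one_div_sub_one_div {L₁ L₂ : ℝ} (h₁ : L₁ ≠ 0) (h₂ : L₂ ≠ 0) (A B : ℝ) :
    A / L₁ + B * (1 / L₂ - 1 / L₁) = (L₂ / L₁ * (B - A) - B) / (-L₂) := by
  field_simp
  ring

theorem stmt10 {ι : Type*} [Fintype ι] [Nonempty ι] (N : ι → ℕ) (hN : ∀ j, 0 < N j)
    (r₁ r₂ : ℝ) (h1 : 0 < r₁) (h12 : r₁ ≤ r₂) (h2 : r₂ < 1) :
    IsGreatest
      {d : ℝ | ∃ p : ((j : ι) × Fin (N j)) → ℝ,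
        (∀ i, 0 ≤ p i) ∧ (∑ i, p i = 1) ∧
        d = (∑ i, p i * Real.log (p i)) / Real.log r₁ +
            (∑ j : ι, (∑ i : Fin (N j), p ⟨j, i⟩) * Real.log (∑ i : Fin (N j), p ⟨j, i⟩)) *
              (1 / Real.log r₂ - 1 / Real.log r₁)}
      (Real.log (∑ j : ι, (N j : ℝ) ^ (Real.log r₂ / Real.log r₁)) / (-Real.log r₂)) := by
  have hL₁ : log r₁ < 0 := log_neg h1 (h12.trans_lt h2)
  have hL₂ : log r₂ < 0 := log_neg (h1.trans_le h12) h2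
  have hγ : 0 ≤ log r₂ / log r₁ := div_nonneg_of_nonpos hL₂.le hL₁.le
  have : ∀ j, Nonempty (Fin (N j)) := fun j => ⟨⟨0, hN j⟩⟩
  have hrescale := div_add_mul_one_div_sub_one_div hL₁.ne hL₂.ne
  have hmax := dimFunctional_optimalWeight (β := fun j => Fin (N j)) (log r₂ / log r₁)
  simp only [Fintype.card_fin] at hmax
  refine ⟨⟨optimalWeight (log r₂ / log r₁), optimalWeight_nonneg _, sum_optimalWeight _, ?_⟩, ?_⟩
  · rw [hrescale]
    exact congrArg (· / -log r₂) hmax.symm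
  · rintro _ ⟨p, hp, hp₁, rfl⟩
    rw [hrescale]
    have := dimFunctional_le hγ hp hp₁
    simp only [Fintype.card_fin] at this
    exact div_le_div_of_nonneg_right this (neg_pos.2 hL₂).le
end

section
/- Let λ > 1 and α ∈ (0,1). Then the series S(λ) := ∑_{k=0}^∞ (k+1)^α λ^{−k} converges, and the function F(λ) := 2λ + (λ−1)·S(λ) − λ² is continuous and has a unique zero λ* on (1, ∞). -/
open Set

/-!
For `λ ≠ 1` the function factors as `F(λ) = (λ - 1) (S(λ) - g(λ))` with
`g(λ) = λ - 1 - (λ - 1)⁻¹`. On `(1, ∞)` the series `S` is nonnegative, antitone (termwise) and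
continuous (on `(b, ∞)` it is dominated by its terms at `b > 1`), whereas `g` increases strictly
from `-∞` to `∞`. Hence `S - g` is continuous, strictly decreasing, positive at `3/2` and
negative far out, so it has exactly one zero.
-/

noncomputable def weightedGeometricSum (α lam : ℝ) : ℝ :=
  ∑' k : ℕ, ((k : ℝ) + 1) ^ α * lam ^ (-(k : ℤ))

lemma summable_add_one_pow_mul_geometric (n : ℕ) {r : ℝ} (hr₀ : 0 < r) (hr₁ : r < 1) :
    Summable fun k : ℕ => ((k : ℝ) + 1) ^ n * r ^ k := by
  have hshift : Summable fun k : ℕ => ((k + 1 : ℕ) : ℝ) ^ n * r ^ (k + 1) :=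
    (summable_nat_add_iff (f := fun k : ℕ => (k : ℝ) ^ n * r ^ k) 1).2
      (summable_pow_mul_geometric_of_norm_lt_one n (by rwa [Real.norm_of_nonneg hr₀.le]))
  refine (hshift.mul_left r⁻¹).congr fun k => ?_
  push_cast
  rw [pow_succ', mul_left_comm, inv_mul_cancel_left₀ hr₀.ne']

lemma summable_add_one_rpow_mul_geometric (α : ℝ) {r : ℝ} (hr₀ : 0 < r) (hr₁ : r < 1) :
    Summable fun k : ℕ => ((k : ℝ) + 1) ^ α * r ^ k := by
  refine .of_nonneg_of_le (fun k => by positivity) (fun k => ?_)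
    (summable_add_one_pow_mul_geometric ⌈α⌉₊ hr₀ hr₁)
  have hk : (1 : ℝ) ≤ k + 1 := by linarith [k.cast_nonneg (α := ℝ)]
  gcongr ?_ * _
  exact (Real.rpow_le_rpow_of_exponent_le hk (Nat.le_ceil α)).trans_eq (Real.rpow_natCast _ _)

lemma summable_add_one_rpow_mul_zpow_neg (α : ℝ) {lam : ℝ} (h : 1 < lam) :
    Summable fun k : ℕ => ((k : ℝ) + 1) ^ α * lam ^ (-(k : ℤ)) := by
  simpa only [zpow_neg, zpow_natCast, inv_pow] using
    summable_add_one_rpow_mul_geometric α (r := lam⁻¹) (by positivity) (inv_lt_one_of_one_lt₀ h)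

lemma add_one_rpow_mul_zpow_neg_le (α : ℝ) (k : ℕ) {x y : ℝ} (hx : 0 < x) (hxy : x ≤ y) :
    ((k : ℝ) + 1) ^ α * y ^ (-(k : ℤ)) ≤ ((k : ℝ) + 1) ^ α * x ^ (-(k : ℤ)) := by
  have hy : 0 < y := hx.trans_le hxy
  simp only [zpow_neg, zpow_natCast, ← inv_pow]
  gcongr

lemma weightedGeometricSum_nonneg (α : ℝ) {lam : ℝ} (h : 0 ≤ lam) :
    0 ≤ weightedGeometricSum α lam :=
  tsum_nonneg fun k => by positivity

lemma antitoneOn_weightedGeometricSum (α : ℝ) : AntitoneOn (weightedGeometricSum α) (Ioi 1) :=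
  fun _ hx _ hy hxy => Summable.tsum_le_tsum
    (fun k => add_one_rpow_mul_zpow_neg_le α k (zero_lt_one.trans hx) hxy)
    (summable_add_one_rpow_mul_zpow_neg α hy) (summable_add_one_rpow_mul_zpow_neg α hx)

lemma continuousOn_weightedGeometricSum (α : ℝ) :
    ContinuousOn (weightedGeometricSum α) (Ioi 1) := by
  intro x hx
  obtain ⟨b, hb, hbx⟩ := exists_between (mem_Ioi.1 hx)
  have hb₀ : (0 : ℝ) < b := zero_lt_one.trans hb
  have hcont : ContinuousOn (weightedGeometricSum α) (Ioi b) := by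
    refine continuousOn_tsum (fun k => ?_) (summable_add_one_rpow_mul_zpow_neg α hb) fun k y hy => ?_
    · exact continuousOn_const.mul
        ((continuousOn_zpow₀ _).mono fun y hy => (hb₀.trans hy).ne')
    · have hy₀ : 0 < y := hb₀.trans hy
      rw [Real.norm_of_nonneg (by positivity)]
      exact add_one_rpow_mul_zpow_neg_le α k hb₀ (le_of_lt hy)
  exact (hcont.continuousAt (Ioi_mem_nhds hbx)).continuousWithinAt

lemma strictMonoOn_sub_one_sub_inv : StrictMonoOn (fun z : ℝ => z - 1 - (z - 1)⁻¹) (Ioi 1) := by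
  intro y hy z hz hyz
  have : (z - 1)⁻¹ < (y - 1)⁻¹ := inv_strictAnti₀ (sub_pos.2 hy) (by linarith)
  dsimp only
  linarith

lemma two_mul_add_mul_sub_sq_eq {lam : ℝ} (s : ℝ) (h : lam ≠ 1) :
    2 * lam + (lam - 1) * s - lam ^ 2 = (lam - 1) * (s - (lam - 1 - (lam - 1)⁻¹)) := by
  have : lam - 1 ≠ 0 := sub_ne_zero.2 h
  field_simp
  ring

lemma existsUnique_weightedGeometricSum_eq (α : ℝ) :
    ∃! lam : ℝ, lam ∈ Ioi 1 ∧ weightedGeometricSum α lam = lam - 1 - (lam - 1)⁻¹ := by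
  set S := weightedGeometricSum α
  set G : ℝ → ℝ := fun z => S z - (z - 1 - (z - 1)⁻¹) with hG
  have hanti : StrictAntiOn G (Ioi 1) := fun y hy z hz hyz => by
    have hS := antitoneOn_weightedGeometricSum α hy hz hyz.le
    have hg := strictMonoOn_sub_one_sub_inv hy hz hyz
    simp only [hG] at hg ⊢
    linarith
  have hcont : ContinuousOn G (Ioi 1) := by
    refine (continuousOn_weightedGeometricSum α).sub ?_
    exact (continuousOn_id.sub continuousOn_const).sub
      ((continuousOn_id.sub continuousOn_const).inv₀ fun z hz => sub_ne_zero.2 (ne_of_gt hz))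
  have hS₂ : 0 ≤ S 2 := weightedGeometricSum_nonneg α zero_le_two
  have hleft : 0 < G (3 / 2) := by
    have := weightedGeometricSum_nonneg α (show (0 : ℝ) ≤ 3 / 2 by norm_num)
    norm_num [hG]
    linarith
  -- Beyond `2` we have `S ≤ S 2`, so `z - 1 - (z - 1)⁻¹` overtakes `S` by `z = S 2 + 3`.
  have hright : G (S 2 + 3) < 0 := by
    have hS := antitoneOn_weightedGeometricSum α (show (1 : ℝ) < 2 by norm_num)
      (show 1 < S 2 + 3 by linarith) (by linarith)
    have hinv : (S 2 + 3 - 1)⁻¹ ≤ 2⁻¹ := inv_anti₀ two_pos (by linarith)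
    simp only [hG]
    linarith
  have hIcc : Icc (3 / 2) (S 2 + 3) ⊆ Ioi 1 := fun z hz => by
    simp only [mem_Icc, mem_Ioi] at hz ⊢
    linarith [hz.1]
  obtain ⟨c, hc, hGc⟩ := intermediate_value_Icc' (by linarith) (hcont.mono hIcc)
    ⟨hright.le, hleft.le⟩
  refine ⟨c, ⟨hIcc hc, sub_eq_zero.1 hGc⟩, fun y ⟨hy, hSy⟩ => hanti.injOn hy (hIcc hc) ?_⟩
  rw [hGc]
  exact sub_eq_zero.2 hSy

theorem stmt11_general (α : ℝ) :
    (∀ lam : ℝ, 1 < lam → Summable fun k : ℕ => ((k : ℝ) + 1) ^ α * lam ^ (-(k : ℤ))) ∧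
    ContinuousOn (fun lam : ℝ =>
      2 * lam + (lam - 1) * (∑' k : ℕ, ((k : ℝ) + 1) ^ α * lam ^ (-(k : ℤ))) - lam ^ 2)
      (Set.Ioi 1) ∧
    ∃! lam : ℝ, lam ∈ Set.Ioi (1:ℝ) ∧
      2 * lam + (lam - 1) * (∑' k : ℕ, ((k : ℝ) + 1) ^ α * lam ^ (-(k : ℤ))) - lam ^ 2 = 0 := by
  refine ⟨fun lam h => summable_add_one_rpow_mul_zpow_neg α h,
    ((continuousOn_const.mul continuousOn_id).add ((continuousOn_id.sub continuousOn_const).mul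
      (continuousOn_weightedGeometricSum α))).sub (continuousOn_id.pow 2), ?_⟩
  obtain ⟨c, ⟨hc, hSc⟩, huniq⟩ := existsUnique_weightedGeometricSum_eq α
  refine ⟨c, ⟨hc, ?_⟩, fun y ⟨hy, hFy⟩ => huniq y ⟨hy, ?_⟩⟩
  · rw [two_mul_add_mul_sub_sq_eq _ (ne_of_gt hc)]
    exact mul_eq_zero_of_right _ (sub_eq_zero.2 hSc)
  · rw [two_mul_add_mul_sub_sq_eq _ (ne_of_gt hy)] at hFy
    exact sub_eq_zero.1 ((mul_eq_zero.1 hFy).resolve_left (sub_ne_zero.2 (ne_of_gt hy)))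

theorem stmt11 (α : ℝ) (hα : α ∈ Set.Ioo (0:ℝ) 1) :
    (∀ lam : ℝ, 1 < lam → Summable fun k : ℕ => ((k : ℝ) + 1) ^ α * lam ^ (-(k : ℤ))) ∧
    ContinuousOn (fun lam : ℝ =>
      2 * lam + (lam - 1) * (∑' k : ℕ, ((k : ℝ) + 1) ^ α * lam ^ (-(k : ℤ))) - lam ^ 2)
      (Set.Ioi 1) ∧
    ∃! lam : ℝ, lam ∈ Set.Ioi (1:ℝ) ∧
      2 * lam + (lam - 1) * (∑' k : ℕ, ((k : ℝ) + 1) ^ α * lam ^ (-(k : ℤ))) - lam ^ 2 = 0 :=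
  stmt11_general α
end

section
/- Let Σ = {1,2,3,4} and W = {21, 31, 41} (as two-letter words). Define Ξₙ as the words of length n over Σ avoiding all factors in W. Then every word w ∈ Σⁿ is equivalent (under the equivalence generated by replacing a factor i4 by (i+1)1 for i ∈ {1,2,3}) to exactly one word in Ξₙ. -/
/-- One rewriting step on words over `{1,2,3,4}` (encoded as `Fin 4`): replace a factor
`i4` by `(i+1)1` for `i ∈ {1,2,3}`; in the encoding, replace `(i,3)` by `(i+1,0)` for
`i ≠ 3`. -/
def step4 (w₁ w₂ : List (Fin 4)) : Prop :=
  ∃ (u v : List (Fin 4)) (i : Fin 4), i ≠ 3 ∧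
    w₁ = u ++ [i, 3] ++ v ∧ w₂ = u ++ [i + 1, 0] ++ v

abbrev RR : Fin 4 → Fin 4 → Prop := fun a b => ¬(a ≠ 0 ∧ b = 0)

def phi (w : List (Fin 4)) : ℕ := w.foldl (fun acc d => 3 * acc + d.val) 0

def dsum (w : List (Fin 4)) : ℕ := (w.map Fin.val).sum

lemma phi_append (u v : List (Fin 4)) :
    phi (u ++ v) = List.foldl (fun acc d => 3 * acc + d.val) (phi u) v :=
  List.foldl_append

lemma phi_concat (u : List (Fin 4)) (a : Fin 4) : phi (u ++ [a]) = 3 * phi u + a.val := by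
  rw [phi_append]; rfl

lemma step4_length {w1 w2 : List (Fin 4)} (h : step4 w1 w2) : w1.length = w2.length := by
  obtain ⟨u, v, i, hi, h1, h2⟩ := h; subst h1; subst h2; simp

lemma fin_pred_facts : ∀ a : Fin 4, a ≠ 0 →
    a - 1 ≠ 3 ∧ a - 1 + 1 = a ∧ ((a - 1 : Fin 4) : ℕ) + 1 = (a : ℕ) := by decide

lemma fin_succ_val : ∀ i : Fin 4, i ≠ 3 → ((i + 1 : Fin 4) : ℕ) = (i : ℕ) + 1 := by decide

lemma step4_phi {w1 w2 : List (Fin 4)} (h : step4 w1 w2) : phi w1 = phi w2 := by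
  obtain ⟨u, v, i, hi, h1, h2⟩ := h
  have hv := fin_succ_val i hi
  subst h1; subst h2
  have key : phi (u ++ [i, 3]) = phi (u ++ [i + 1, 0]) := by
    rw [show u ++ [i, 3] = (u ++ [i]) ++ [(3 : Fin 4)] by simp,
        show u ++ [i + 1, 0] = (u ++ [i + 1]) ++ [(0 : Fin 4)] by simp,
        phi_concat, phi_concat, phi_concat, phi_concat]
    have h3 : ((3 : Fin 4) : ℕ) = 3 := rfl
    have h0 : ((0 : Fin 4) : ℕ) = 0 := rfl
    omega
  calc phi (u ++ [i, 3] ++ v)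
      = phi ((u ++ [i, 3]) ++ v) := by rw [List.append_assoc]
    _ = List.foldl (fun acc d => 3 * acc + d.val) (phi (u ++ [i, 3])) v := phi_append _ _
    _ = List.foldl (fun acc d => 3 * acc + d.val) (phi (u ++ [i + 1, 0])) v := by rw [key]
    _ = phi ((u ++ [i + 1, 0]) ++ v) := (phi_append _ _).symm
    _ = phi (u ++ [i + 1, 0] ++ v) := by rw [List.append_assoc]

lemma eqv_phi {a b : List (Fin 4)} (h : Relation.EqvGen step4 a b) :
    phi a = phi b ∧ a.length = b.length := by
  induction h with
  | rel x y h => exact ⟨step4_phi h, step4_length h⟩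
  | refl _ => exact ⟨rfl, rfl⟩
  | symm _ _ _ ih => exact ⟨ih.1.symm, ih.2.symm⟩
  | trans _ _ _ _ _ ih1 ih2 => exact ⟨ih1.1.trans ih2.1, ih1.2.trans ih2.2⟩

lemma phi_zero : ∀ u : List (Fin 4), List.Chain' RR (u ++ [0]) → phi (u ++ [0]) = 0 := by
  intro u
  induction u using List.reverseRecOn with
  | nil => intro _; rfl
  | append_singleton u' c ih =>
    intro h
    have h' := List.isChain_append.mp h
    have hc : c = 0 := by
      have := h'.2.2 c (by simp) 0 (by simp)
      by_contra hne; exact this ⟨hne, rfl⟩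
    subst hc
    have h0 := ih h'.1
    rw [show u' ++ [(0 : Fin 4)] ++ [(0 : Fin 4)] = (u' ++ [(0 : Fin 4)]) ++ [(0 : Fin 4)] by
      simp, phi_concat, h0]
    simp

lemma chain_or_bad : ∀ w : List (Fin 4),
    List.Chain' RR w ∨ ∃ (u v : List (Fin 4)) (a : Fin 4), a ≠ 0 ∧ w = u ++ [a, 0] ++ v := by
  intro w
  induction w with
  | nil => exact Or.inl List.isChain_nil
  | cons x t ih =>
    match t, ih with
    | [], _ => exact Or.inl (List.isChain_singleton _)
    | b :: t', ih =>
      rcases ih with hch | ⟨u, v, a, ha, he⟩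
      · by_cases hx : x ≠ 0 ∧ b = 0
        · exact Or.inr ⟨[], t', x, hx.1, by simp [hx.2]⟩
        · exact Or.inl (List.isChain_cons_cons.mpr ⟨hx, hch⟩)
      · exact Or.inr ⟨x :: u, v, a, ha, by simp [he]⟩

lemma dsum_le (w : List (Fin 4)) : dsum w ≤ 3 * w.length := by
  induction w with
  | nil => simp [dsum]
  | cons a t ih =>
    have := a.isLt
    simp only [dsum, List.map_cons, List.sum_cons, List.length_cons] at *
    omega

lemma dsum_app (u v : List (Fin 4)) : dsum (u ++ v) = dsum u + dsum v := by
  simp [dsum]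

lemma exists_nf (w : List (Fin 4)) :
    ∃ w', (w'.length = w.length ∧ List.Chain' RR w') ∧ Relation.EqvGen step4 w w' := by
  suffices h : ∀ μ w, 3 * w.length - dsum w = μ →
      ∃ w', (w'.length = w.length ∧ List.Chain' RR w') ∧ Relation.EqvGen step4 w w' from
    h _ w rfl
  intro μ
  induction μ using Nat.strong_induction_on with
  | _ μ ih =>
    intro w hw
    rcases chain_or_bad w with hch | ⟨u, v, a, ha, he⟩
    · exact ⟨w, ⟨rfl, hch⟩, Relation.EqvGen.refl w⟩
    · have hfacts := fin_pred_facts a ha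
      set w'' := u ++ [a - 1, 3] ++ v with hw''
      have hstep : step4 w'' w :=
        ⟨u, v, a - 1, hfacts.1, rfl, by rw [he, hfacts.2.1]⟩
      have hlen : w''.length = w.length := step4_length hstep
      have hds : dsum w'' = dsum w + 2 := by
        rw [hw'', he, dsum_app, dsum_app, dsum_app, dsum_app]
        have := hfacts.2.2
        simp [dsum]
        omega
      have hlt : 3 * w''.length - dsum w'' < μ := by
        have h1 := dsum_le u
        have h2 := dsum_le v
        have hdw : dsum w = dsum u + a.val + 0 + dsum v := by
          rw [he, dsum_app, dsum_app]; simp [dsum]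
        have hwl : w.length = u.length + 2 + v.length := by rw [he]; simp; try omega
        have hav := a.isLt
        omega
      obtain ⟨w', ⟨hl, hc⟩, heqv⟩ := ih _ hlt w'' rfl
      exact ⟨w', ⟨hl.trans hlen, hc⟩,
        Relation.EqvGen.trans _ _ _
          (Relation.EqvGen.symm _ _ (Relation.EqvGen.rel _ _ hstep)) heqv⟩

lemma nf_unique : ∀ w1 w2 : List (Fin 4), List.Chain' RR w1 → List.Chain' RR w2 →
    w1.length = w2.length → phi w1 = phi w2 → w1 = w2 := by
  intro w1
  induction w1 using List.reverseRecOn with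
  | nil =>
    intro w2 _ _ hlen _
    exact (List.length_eq_zero_iff.mp hlen.symm).symm
  | append_singleton u1 a ih =>
    intro w2 h1 h2 hlen hphi
    rcases List.eq_nil_or_concat w2 with rfl | ⟨u2, b, rfl⟩
    · simp at hlen
    · simp only [List.concat_eq_append] at *
      have h1' := List.isChain_append.mp h1
      have h2' := List.isChain_append.mp h2
      rw [phi_concat, phi_concat] at hphi
      have hl : u1.length = u2.length := by simpa using hlen
      have hav := a.isLt
      have hbv := b.isLt
      have hcases : a.val = b.val ∨ (a.val = 0 ∧ b.val = 3) ∨ (a.val = 3 ∧ b.val = 0) := by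
        omega
      rcases hcases with h | ⟨h0, h3⟩ | ⟨h3, h0⟩
      · have hab : a = b := Fin.ext h
        subst hab
        have hp : phi u1 = phi u2 := by omega
        rw [ih u2 h1'.1 h2'.1 hl hp]
      · have ha0 : a = 0 := Fin.ext h0
        subst ha0
        have hz := phi_zero u1 h1
        rw [phi_concat] at hz
        simp only [Fin.val_zero] at *
        omega
      · have hb0 : b = 0 := Fin.ext h0
        subst hb0
        have hz := phi_zero u2 h2
        rw [phi_concat] at hz
        simp only [Fin.val_zero] at *
        omega

/-- Every word is equivalent, under the equivalence generated by the rewriting rules,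
to exactly one word avoiding the factors `21, 31, 41` (encoded as `(a,0)` with `a ≠ 0`). -/
theorem stmt12 (w : List (Fin 4)) :
    ∃! w' : List (Fin 4),
      (w'.length = w.length ∧ w'.Chain' fun a b => ¬(a ≠ 0 ∧ b = 0)) ∧
      Relation.EqvGen step4 w w' := by
  obtain ⟨w', ⟨hlen, hch⟩, heqv⟩ := exists_nf w
  refine ⟨w', ⟨⟨hlen, hch⟩, heqv⟩, ?_⟩
  rintro y ⟨⟨hylen, hych⟩, hyeqv⟩
  have h := eqv_phi (Relation.EqvGen.trans _ _ _
    (Relation.EqvGen.symm _ _ hyeqv) heqv)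
  exact nf_unique y w' hych hch h.2 h.1
end
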